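/- arXiv:2301.11321 — 6 statements merged into one kernel-verified Lean document; each statement's English description precedes it below -/
import Mathlib

section
/- Let π be a target policy and μ a behavior policy on a finite MDP, and let β be any trace function (nonnegative, with β = 1 on length-0 trajectories) such that the series defining M and Z converge entrywise absolutely. Then Q^π is a fixed point of the operator M, and for every Q ∈ ℝ^n one has MQ − Q^π = Z(Q − Q^π), where Z := Σ_{t=1}^∞ γ^t (B_{t−1} P_π − B_t). -/
open scoped BigOperators

/-- `P` is a transition function: `P s a` is a probability distribution on next states. -/
def IsTransition {S A : Type} [Fintype S] (P : S → A → S → ℝ) : Prop :=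
  (∀ s a s', 0 ≤ P s a s') ∧ ∀ s a, ∑ s', P s a s' = 1

/-- `π` is a policy: `π s` is a probability distribution on actions. -/
def IsPolicy {S A : Type} [Fintype A] (π : S → A → ℝ) : Prop :=
  (∀ s a, 0 ≤ π s a) ∧ ∀ s, ∑ a, π s a = 1

/-- A behavior policy assigns positive probability to every action in every state. -/
def IsBehavior {S A : Type} [Fintype A] (μ : S → A → ℝ) : Prop :=
  IsPolicy μ ∧ ∀ s a, 0 < μ s a

/-- The policy matrix `P_π((s,a),(s',a')) = P(s'|s,a)·π(a'|s')`. -/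
def polMat {S A : Type} (P : S → A → S → ℝ) (π : S → A → ℝ) :
    Matrix (S × A) (S × A) ℝ :=
  fun x y => P x.1 x.2 y.1 * π y.1 y.2

/-- The importance-sampling ratio `ρ(s,a) = π(a|s) / μ(a|s)`. -/
noncomputable def isRatio {S A : Type} (π μ : S → A → ℝ) (x : S × A) : ℝ :=
  π x.1 x.2 / μ x.1 x.2

/-- Probability under behavior policy `μ` of a length-`t` trajectory
`F = ((S_0,A_0),…,(S_t,A_t))`:  `∏_{k=1}^t P(S_k|S_{k-1},A_{k-1})·μ(A_k|S_k)`. -/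
def prMu {S A : Type} (P : S → A → S → ℝ) (μ : S → A → ℝ) {t : ℕ}
    (F : Fin (t + 1) → S × A) : ℝ :=
  ∏ k : Fin t,
    (P (F k.castSucc).1 (F k.castSucc).2 (F k.succ).1 * μ (F k.succ).1 (F k.succ).2)

/-- A trace function: a nonnegative weight for every finite trajectory,
equal to `1` on length-0 trajectories. -/
def IsTrace {S A : Type} (β : (t : ℕ) → (Fin (t + 1) → S × A) → ℝ) : Prop :=
  (∀ t F, 0 ≤ β t F) ∧ ∀ F : Fin 1 → S × A, β 0 F = 1

/-- Condition 1: `β(F_t) ≤ β(F_{t-1})·ρ_t` for every `t ≥ 1` and every trajectory `F_t`,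
where `F_{t-1}` is the length-`(t-1)` prefix. -/
def Cond1 {S A : Type} (π μ : S → A → ℝ)
    (β : (t : ℕ) → (Fin (t + 1) → S × A) → ℝ) : Prop :=
  ∀ (t : ℕ) (F : Fin (t + 2) → S × A),
    β (t + 1) F ≤ β t (fun k => F k.castSucc) * isRatio π μ (F (Fin.last (t + 1)))

/-- The matrix `B_t((s,a),(s',a')) = Σ_{F_t from (s,a) ending at (s',a')} Pr_μ(F_t)·β(F_t)`. -/
noncomputable def Bmat {S A : Type} [Fintype S] [Fintype A] [DecidableEq S] [DecidableEq A]
    (P : S → A → S → ℝ) (μ : S → A → ℝ)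
    (β : (t : ℕ) → (Fin (t + 1) → S × A) → ℝ) (t : ℕ) :
    Matrix (S × A) (S × A) ℝ :=
  fun x y => ∑ F : Fin (t + 1) → S × A,
    if F 0 = x ∧ F (Fin.last t) = y then prMu P μ F * β t F else 0

/-- The Bellman operator `T_π Q = R + γ P_π Q`. -/
noncomputable def Tpi {S A : Type} [Fintype S] [Fintype A]
    (P : S → A → S → ℝ) (R : S × A → ℝ) (π : S → A → ℝ) (γ : ℝ)
    (Q : S × A → ℝ) : S × A → ℝ :=
  fun x => R x + γ * (polMat P π).mulVec Q x

/-- The Bellman optimality operator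
`(T Q)(s,a) = R(s,a) + γ Σ_{s'} P(s'|s,a) max_{a'} Q(s',a')`. -/
noncomputable def Topt {S A : Type} [Fintype S] [Fintype A] [Nonempty A]
    (P : S → A → S → ℝ) (R : S × A → ℝ) (γ : ℝ) (Q : S × A → ℝ) : S × A → ℝ :=
  fun x => R x + γ * ∑ s', P x.1 x.2 s' * ⨆ a', Q (s', a')

/-- The operator `M Q = Q + Σ_{t=0}^∞ γ^t B_t (T_π Q − Q)`. -/
noncomputable def Mop {S A : Type} [Fintype S] [Fintype A] [DecidableEq S] [DecidableEq A]
    (P : S → A → S → ℝ) (R : S × A → ℝ) (π μ : S → A → ℝ)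
    (β : (t : ℕ) → (Fin (t + 1) → S × A) → ℝ) (γ : ℝ)
    (Q : S × A → ℝ) : S × A → ℝ :=
  fun x => Q x + ∑' t : ℕ,
    γ ^ t * (Bmat P μ β t).mulVec (fun y => Tpi P R π γ Q y - Q y) x

/-- The matrix `Z = Σ_{t=1}^∞ γ^t (B_{t−1} P_π − B_t)`. -/
noncomputable def Zmat {S A : Type} [Fintype S] [Fintype A] [DecidableEq S] [DecidableEq A]
    (P : S → A → S → ℝ) (π μ : S → A → ℝ)
    (β : (t : ℕ) → (Fin (t + 1) → S × A) → ℝ) (γ : ℝ) :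
    Matrix (S × A) (S × A) ℝ :=
  fun x y => ∑' t : ℕ,
    γ ^ (t + 1) * ((Bmat P μ β t * polMat P π - Bmat P μ β (t + 1)) x y)

/-- The matrix `C = Σ_{t=0}^∞ γ^t B_t`. -/
noncomputable def Cmat {S A : Type} [Fintype S] [Fintype A] [DecidableEq S] [DecidableEq A]
    (P : S → A → S → ℝ) (μ : S → A → ℝ)
    (β : (t : ℕ) → (Fin (t + 1) → S × A) → ℝ) (γ : ℝ) :
    Matrix (S × A) (S × A) ℝ :=
  fun x y => ∑' t : ℕ, γ ^ t * Bmat P μ β t x y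

/-- The operator `M Q = Q + C (T_π Q − Q)` with `C = Σ_t γ^t B_t`. -/
noncomputable def MopC {S A : Type} [Fintype S] [Fintype A] [DecidableEq S] [DecidableEq A]
    (P : S → A → S → ℝ) (R : S × A → ℝ) (π μ : S → A → ℝ)
    (β : (t : ℕ) → (Fin (t + 1) → S × A) → ℝ) (γ : ℝ)
    (Q : S × A → ℝ) : S × A → ℝ :=
  fun x => Q x + (Cmat P μ β γ).mulVec (fun y => Tpi P R π γ Q y - Q y) x


lemma Bmat_zero {S A : Type} [Fintype S] [Fintype A] [DecidableEq S] [DecidableEq A]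
    (P : S → A → S → ℝ) (μ : S → A → ℝ)
    (β : (t : ℕ) → (Fin (t + 1) → S × A) → ℝ) (hβ : IsTrace β) :
    Bmat P μ β 0 = 1 := by
  funext x y
  have key : ∀ F : Fin 1 → S × A,
      (if F 0 = x ∧ F (Fin.last 0) = y then prMu P μ F * β 0 F else 0)
        = (if F 0 = x ∧ F 0 = y then 1 else 0) := by
    intro F
    have h1 : prMu P μ F = 1 := by simp [prMu]
    have h2 : β 0 F = 1 := hβ.2 F
    have h3 : Fin.last 0 = (0 : Fin 1) := rfl
    rw [h1, h2, h3, mul_one]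
  simp only [Bmat]
  rw [Finset.sum_congr rfl (fun F _ => key F)]
  rw [← ((Equiv.funUnique (Fin 1) (S × A)).symm.sum_comp
    (fun F : Fin 1 → S × A => if F 0 = x ∧ F 0 = y then (1 : ℝ) else 0))]
  simp only [Equiv.funUnique_symm_apply, Function.const_apply]
  by_cases h : x = y
  · subst h
    simp [Matrix.one_apply]
  · rw [Finset.sum_eq_zero, Matrix.one_apply_ne h]
    intro z _
    rw [if_neg]
    rintro ⟨rfl, rfl⟩
    exact h rfl

/-- `Q^π` is a fixed point of `M` and `MQ − Q^π = Z(Q − Q^π)` for all `Q`. -/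
theorem stmt0 {S A : Type} [Fintype S] [Fintype A] [DecidableEq S] [DecidableEq A]
    [Nonempty S] [Nonempty A]
    (P : S → A → S → ℝ) (R : S × A → ℝ) (π μ : S → A → ℝ) (γ : ℝ)
    (β : (t : ℕ) → (Fin (t + 1) → S × A) → ℝ)
    (hP : IsTransition P) (hπ : IsPolicy π) (hμ : IsBehavior μ) (hβ : IsTrace β)
    (hγ0 : 0 ≤ γ) (hγ1 : γ < 1)
    (hMabs : ∀ x y : S × A, Summable fun t : ℕ => |γ ^ t * Bmat P μ β t x y|)
    (hZabs : ∀ x y : S × A, Summable fun t : ℕ =>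
      |γ ^ (t + 1) * ((Bmat P μ β t * polMat P π - Bmat P μ β (t + 1)) x y)|)
    (Qpi : S × A → ℝ) (hQpi : Tpi P R π γ Qpi = Qpi) :
    Mop P R π μ β γ Qpi = Qpi ∧
      ∀ Q : S × A → ℝ,
        Mop P R π μ β γ Q - Qpi = (Zmat P π μ β γ).mulVec (Q - Qpi) := by
  have hB0 := Bmat_zero P μ β hβ
  have hfix : Mop P R π μ β γ Qpi = Qpi := by
    funext x
    have hz : (fun y => Tpi P R π γ Qpi y - Qpi y) = 0 := by
      funext y; rw [hQpi]; simp
    simp [Mop, hz, Matrix.mulVec_zero]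
  refine ⟨hfix, ?_⟩
  intro Q
  funext x
  set E : (S × A) → ℝ := fun y => Q y - Qpi y with hE
  have hEeq : (Q - Qpi) = E := rfl
  -- identity for the TD error
  have hD : (fun y => Tpi P R π γ Q y - Q y)
      = fun y => γ * (polMat P π).mulVec E y - E y := by
    funext y
    have h1 : Tpi P R π γ Qpi y = Qpi y := by rw [hQpi]
    simp only [Tpi] at h1 ⊢
    have h2 : (polMat P π).mulVec E y
        = (polMat P π).mulVec Q y - (polMat P π).mulVec Qpi y := by
      simp only [Matrix.mulVec, dotProduct, hE]
      rw [← Finset.sum_sub_distrib]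
      exact Finset.sum_congr rfl (fun z _ => by ring)
    rw [h2]; ring_nf; linarith
  set g : ℕ → ℝ := fun t => γ ^ t * (Bmat P μ β t).mulVec E x with hgdef
  set f : ℕ → ℝ := fun t => γ ^ (t + 1) * ((Bmat P μ β t * polMat P π).mulVec E) x with hfdef
  set h : ℕ → ℝ := fun t =>
    γ ^ (t + 1) * ((Bmat P μ β t * polMat P π - Bmat P μ β (t + 1)).mulVec E) x with hhdef
  -- summability
  have hgS : Summable g := by
    have : ∀ t, g t = ∑ y, γ ^ t * Bmat P μ β t x y * E y := by
      intro t
      simp [hgdef, Matrix.mulVec, dotProduct, Finset.mul_sum, mul_assoc]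
    rw [funext this]
    exact summable_sum fun y _ => ((hMabs x y).of_abs).mul_right (E y)
  have hhS : Summable h := by
    have : ∀ t, h t = ∑ y,
        γ ^ (t + 1) * ((Bmat P μ β t * polMat P π - Bmat P μ β (t + 1)) x y) * E y := by
      intro t
      simp [hhdef, Matrix.mulVec, dotProduct, Finset.mul_sum, mul_assoc]
    rw [funext this]
    exact summable_sum fun y _ => ((hZabs x y).of_abs).mul_right (E y)
  have hgsucc : Summable fun t => g (t + 1) := (summable_nat_add_iff 1).mpr hgS
  have hfh : ∀ t, f t = h t + g (t + 1) := by
    intro t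
    simp only [hfdef, hhdef, hgdef, Matrix.sub_mulVec, Pi.sub_apply]
    ring
  have hfS : Summable f := by
    rw [funext hfh]; exact hhS.add hgsucc
  -- the term of Mop
  have hterm : ∀ t, γ ^ t * (Bmat P μ β t).mulVec (fun y => Tpi P R π γ Q y - Q y) x
      = f t - g t := by
    intro t
    rw [hD]
    have : (fun y => γ * (polMat P π).mulVec E y - E y)
        = (γ • (polMat P π).mulVec E) - E := rfl
    rw [this, Matrix.mulVec_sub, Matrix.mulVec_smul]
    simp only [Pi.sub_apply, Pi.smul_apply, smul_eq_mul, hfdef, hgdef]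
    rw [← Matrix.mulVec_mulVec]
    ring
  have hg0 : g 0 = E x := by
    simp [hgdef, hB0, Matrix.one_mulVec]
  -- LHS
  have hLHS : (Mop P R π μ β γ Q - Qpi) x
      = E x + ((∑' t, f t) - ∑' t, g t) := by
    simp only [Pi.sub_apply, Mop]
    rw [tsum_congr hterm, Summable.tsum_sub hfS hgS, hE]
    ring
  -- RHS
  have hRHS : (Zmat P π μ β γ).mulVec (Q - Qpi) x = ∑' t, h t := by
    rw [hEeq]
    have h1 : (Zmat P π μ β γ).mulVec E x
        = ∑ y, (∑' t, γ ^ (t + 1)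
            * ((Bmat P μ β t * polMat P π - Bmat P μ β (t + 1)) x y) * E y) := by
      simp only [Matrix.mulVec, dotProduct, Zmat]
      refine Finset.sum_congr rfl fun y _ => ?_
      rw [← tsum_mul_right]
    rw [h1, ← Summable.tsum_finsetSum (fun y _ => ((hZabs x y).of_abs).mul_right (E y))]
    refine tsum_congr fun t => ?_
    simp [hhdef, Matrix.mulVec, dotProduct, Finset.mul_sum, mul_assoc]
  rw [hLHS, hRHS, funext hfh, Summable.tsum_add hhS hgsucc]
  have := Summable.tsum_eq_zero_add hgS
  rw [hg0] at this
  linarith [this]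
end

section
/- If the trace function β satisfies Condition 1 (β(F_t) ≤ β(F_{t−1})·ρ_t for every t ≥ 1 and every trajectory F_t), then each matrix D_t := B_{t−1} P_π − B_t (t ≥ 1) is entrywise nonnegative, hence Z := Σ_{t=1}^∞ γ^t (B_{t−1} P_π − B_t) has nonnegative entries, and its row sums satisfy Z𝟙 ≤ γ𝟙. -/
open scoped BigOperators

section Aux
variable {S A : Type} [Fintype S] [Fintype A] [DecidableEq S] [DecidableEq A]
  (P : S → A → S → ℝ) (π μ : S → A → ℝ)
  (β : (t : ℕ) → (Fin (t + 1) → S × A) → ℝ)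

lemma prMu_snoc {t : ℕ} (G : Fin (t + 1) → S × A) (z : S × A) :
    prMu P μ (Fin.snoc G z) =
      prMu P μ G * (P (G (Fin.last t)).1 (G (Fin.last t)).2 z.1 * μ z.1 z.2) := by
  unfold prMu
  rw [Fin.prod_univ_castSucc]
  congr 1
  · apply Finset.prod_congr rfl
    intro j _
    have h1 : (Fin.snoc G z : Fin (t+2) → S × A) j.castSucc.castSucc = G j.castSucc :=
      Fin.snoc_castSucc ..
    have h2 : (Fin.snoc G z : Fin (t+2) → S × A) j.castSucc.succ = G j.succ := by
      rw [Fin.succ_castSucc]; exact Fin.snoc_castSucc ..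
    rw [h1, h2]
  · have h1 : (Fin.snoc G z : Fin (t+2) → S × A) (Fin.last t).castSucc = G (Fin.last t) :=
      Fin.snoc_castSucc ..
    have h2 : (Fin.snoc G z : Fin (t+2) → S × A) (Fin.last t).succ = z := by
      rw [Fin.succ_last]; exact Fin.snoc_last ..
    rw [h1, h2]

lemma init_snoc' {t : ℕ} (G : Fin (t + 1) → S × A) (z : S × A) :
    (fun k : Fin (t+1) => (Fin.snoc G z : Fin (t+2) → S × A) k.castSucc) = G := by
  funext k; exact Fin.snoc_castSucc ..

lemma snoc_zero' {t : ℕ} (G : Fin (t + 1) → S × A) (z : S × A) :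
    (Fin.snoc G z : Fin (t+2) → S × A) 0 = G 0 := by
  rw [show (0 : Fin (t+2)) = (0 : Fin (t+1)).castSucc from rfl]
  exact Fin.snoc_castSucc ..

lemma prMu_nonneg (hP : IsTransition P) (hμ : IsBehavior μ) {t : ℕ}
    (F : Fin (t + 1) → S × A) : 0 ≤ prMu P μ F := by
  apply Finset.prod_nonneg
  intro k _
  exact mul_nonneg (hP.1 _ _ _) (hμ.1.1 _ _)

lemma Bmat_nonneg (hP : IsTransition P) (hμ : IsBehavior μ) (hβ : IsTrace β)
    (t : ℕ) (x y : S × A) : 0 ≤ Bmat P μ β t x y := by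
  apply Finset.sum_nonneg
  intro F _
  split
  · exact mul_nonneg (prMu_nonneg P μ hP hμ F) (hβ.1 _ _)
  · exact le_refl 0
lemma sum_collapse_y {t : ℕ} (x y : S × A) (c : (Fin (t+1) → S × A) → (S × A) → ℝ) :
    ∑ z : S × A, ∑ G : Fin (t+1) → S × A, (if G 0 = x ∧ z = y then c G z else 0)
      = ∑ G : Fin (t+1) → S × A, (if G 0 = x then c G y else 0) := by
  rw [Finset.sum_comm]
  apply Finset.sum_congr rfl
  intro G _
  simp only [ite_and]
  by_cases h : G 0 = x <;> simp [h]

lemma mul_apply_common (t : ℕ) (x y : S × A) :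
    (Bmat P μ β t * polMat P π) x y
      = ∑ G : Fin (t+1) → S × A,
          (if G 0 = x then
            prMu P μ G * β t G *
              (P (G (Fin.last t)).1 (G (Fin.last t)).2 y.1 * π y.1 y.2) else 0) := by
  rw [Matrix.mul_apply]
  unfold Bmat polMat
  simp only [Finset.sum_mul, ite_mul, zero_mul]
  rw [Finset.sum_comm]
  apply Finset.sum_congr rfl
  intro G _
  simp only [ite_and]
  by_cases h : G 0 = x <;> simp [h, mul_assoc]

lemma step_le (hP : IsTransition P) (hπ : IsPolicy π) (hμ : IsBehavior μ) (hβ : IsTrace β)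
    (hc : Cond1 π μ β) (t : ℕ) (x y : S × A) :
    Bmat P μ β (t+1) x y ≤ (Bmat P μ β t * polMat P π) x y := by
  rw [mul_apply_common]
  rw [show Bmat P μ β (t+1) x y = ∑ p : (S × A) × (Fin (t+1) → S × A),
      (if p.2 0 = x ∧ p.1 = y then
        prMu P μ (Fin.snoc p.2 p.1) * β (t+1) (Fin.snoc p.2 p.1) else 0) from ?_]
  · rw [Fintype.sum_prod_type]
    rw [← sum_collapse_y (c := fun G z =>
      prMu P μ G * β t G * (P (G (Fin.last t)).1 (G (Fin.last t)).2 y.1 * π y.1 y.2))]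
    apply Finset.sum_le_sum
    intro z _
    apply Finset.sum_le_sum
    intro G _
    by_cases h : G 0 = x ∧ z = y
    · obtain ⟨hx, rfl⟩ := h
      rw [if_pos ⟨hx, rfl⟩, if_pos ⟨hx, rfl⟩]
      have hle := hc t (Fin.snoc G z)
      rw [show (fun k : Fin (t+1) => (Fin.snoc G z : Fin (t+2) → S × A) k.castSucc) = G
          from init_snoc' G z, Fin.snoc_last] at hle
      rw [prMu_snoc]
      have hnn : 0 ≤ prMu P μ G * (P (G (Fin.last t)).1 (G (Fin.last t)).2 z.1 * μ z.1 z.2) :=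
        mul_nonneg (prMu_nonneg P μ hP hμ G) (mul_nonneg (hP.1 _ _ _) (hμ.1.1 _ _))
      have hne : μ z.1 z.2 ≠ 0 := (hμ.2 z.1 z.2).ne'
      calc prMu P μ G * (P (G (Fin.last t)).1 (G (Fin.last t)).2 z.1 * μ z.1 z.2)
            * β (t+1) (Fin.snoc G z)
          ≤ prMu P μ G * (P (G (Fin.last t)).1 (G (Fin.last t)).2 z.1 * μ z.1 z.2)
            * (β t G * isRatio π μ z) := mul_le_mul_of_nonneg_left hle hnn
        _ = prMu P μ G * β t G
            * (P (G (Fin.last t)).1 (G (Fin.last t)).2 z.1 * π z.1 z.2) := by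
            unfold isRatio; field_simp
    · rw [if_neg h, if_neg h]
  · unfold Bmat
    rw [← Equiv.sum_comp (Fin.snocEquiv (fun _ : Fin (t+2) => S × A))]
    apply Finset.sum_congr rfl
    intro p _
    have he : (Fin.snocEquiv (fun _ : Fin (t+2) => S × A)) p = Fin.snoc p.2 p.1 := rfl
    rw [he, Fin.snoc_last, snoc_zero']

lemma row_pol (hP : IsTransition P) (hπ : IsPolicy π) (t : ℕ) (x : S × A) :
    ∑ y : S × A, (Bmat P μ β t * polMat P π) x y = ∑ y : S × A, Bmat P μ β t x y := by
  have hone : ∀ w : S × A, ∑ y : S × A, polMat P π w y = 1 := by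
    intro w
    unfold polMat
    rw [Fintype.sum_prod_type]
    simp [← Finset.mul_sum, hπ.2, hP.2]
  simp only [Matrix.mul_apply]
  rw [Finset.sum_comm]
  simp only [← Finset.mul_sum, hone, mul_one]

lemma row_zero (hβ : IsTrace β) (x : S × A) : ∑ y : S × A, Bmat P μ β 0 x y = 1 := by
  unfold Bmat
  have hp : ∀ F : Fin 1 → S × A, prMu P μ F * β 0 F = 1 := by
    intro F; simp [prMu, hβ.2 F]
  simp only [hp]
  rw [Finset.sum_comm]
  have hlast : (Fin.last 0) = (0 : Fin 1) := rfl
  simp only [hlast, ite_and]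
  have hin : ∀ F : Fin 1 → S × A,
      (∑ y : S × A, if F 0 = x then (if F 0 = y then (1:ℝ) else 0) else 0)
        = if F 0 = x then 1 else 0 := by
    intro F; by_cases h : F 0 = x <;> simp [h]
  simp only [hin]
  rw [← Equiv.sum_comp (Equiv.funUnique (Fin 1) (S × A)).symm]
  simp

end Aux

/-- under Condition 1, each `D_t = B_{t-1}P_π − B_t` is entrywise nonnegative,
hence `Z` has nonnegative entries, and the row sums of `Z` are at most `γ`. -/
theorem stmt1 {S A : Type} [Fintype S] [Fintype A] [DecidableEq S] [DecidableEq A]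
    [Nonempty S] [Nonempty A]
    (P : S → A → S → ℝ) (π μ : S → A → ℝ) (γ : ℝ)
    (β : (t : ℕ) → (Fin (t + 1) → S × A) → ℝ)
    (hP : IsTransition P) (hπ : IsPolicy π) (hμ : IsBehavior μ) (hβ : IsTrace β)
    (hγ0 : 0 ≤ γ) (hγ1 : γ < 1)
    (hc : Cond1 π μ β) :
    (∀ (t : ℕ) (x y : S × A),
        0 ≤ (Bmat P μ β t * polMat P π - Bmat P μ β (t + 1)) x y) ∧
    (∀ x y : S × A, 0 ≤ Zmat P π μ β γ x y) ∧
    ∀ x : S × A, ∑ y : S × A, Zmat P π μ β γ x y ≤ γ := by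
  have hstep := step_le P π μ β hP hπ hμ hβ hc
  have hD : ∀ (t : ℕ) (x y : S × A),
      0 ≤ (Bmat P μ β t * polMat P π - Bmat P μ β (t + 1)) x y := by
    intro t x y
    rw [Matrix.sub_apply]
    exact sub_nonneg.2 (hstep t x y)
  refine ⟨hD, ?_, ?_⟩
  · intro x y
    exact tsum_nonneg fun t => mul_nonneg (pow_nonneg hγ0 _) (hD t x y)
  · intro x
    set r : ℕ → ℝ := fun t => ∑ y : S × A, Bmat P μ β t x y with hrdef
    have hrow : ∀ t, ∑ y : S × A, (Bmat P μ β t * polMat P π) x y = r t :=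
      fun t => row_pol P π μ β hP hπ t x
    have hrnn : ∀ t, 0 ≤ r t :=
      fun t => Finset.sum_nonneg fun y _ => Bmat_nonneg P μ β hP hμ hβ t x y
    have hmono : ∀ t, r (t + 1) ≤ r t := by
      intro t
      rw [← hrow t]
      exact Finset.sum_le_sum fun y _ => hstep t x y
    have hr1 : ∀ t, r t ≤ 1 := by
      intro t
      induction t with
      | zero => exact (row_zero P μ β hβ x).le
      | succ n ih => exact (hmono n).trans ih
    have hDsum : ∀ t, ∑ y : S × A,
        (Bmat P μ β t * polMat P π - Bmat P μ β (t + 1)) x y = r t - r (t + 1) := by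
      intro t
      simp only [Matrix.sub_apply, Finset.sum_sub_distrib]
      rw [hrow]
    have hDle : ∀ (t : ℕ) (y : S × A),
        (Bmat P μ β t * polMat P π - Bmat P μ β (t + 1)) x y ≤ 1 := by
      intro t y
      calc (Bmat P μ β t * polMat P π - Bmat P μ β (t + 1)) x y
          ≤ ∑ y' : S × A, (Bmat P μ β t * polMat P π - Bmat P μ β (t + 1)) x y' :=
            Finset.single_le_sum (fun y' _ => hD t x y') (Finset.mem_univ y)
        _ = r t - r (t + 1) := hDsum t
        _ ≤ 1 := by
            have := hrnn (t + 1); have := hr1 t; linarith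
    have hsum_geo : Summable (fun t : ℕ => γ ^ (t + 1)) := by
      have h := (summable_geometric_of_lt_one hγ0 hγ1).mul_right γ
      apply h.congr
      intro t
      rw [pow_succ]
    have hsummable : ∀ y : S × A, Summable (fun t : ℕ =>
        γ ^ (t + 1) * ((Bmat P μ β t * polMat P π - Bmat P μ β (t + 1)) x y)) := by
      intro y
      apply Summable.of_nonneg_of_le
        (fun t => mul_nonneg (pow_nonneg hγ0 _) (hD t x y)) (fun t => ?_) hsum_geo
      calc γ ^ (t + 1) * ((Bmat P μ β t * polMat P π - Bmat P μ β (t + 1)) x y)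
          ≤ γ ^ (t + 1) * 1 := mul_le_mul_of_nonneg_left (hDle t y) (pow_nonneg hγ0 _)
        _ = γ ^ (t + 1) := mul_one _
    have hswap : ∑ y : S × A, Zmat P π μ β γ x y
        = ∑' t : ℕ, ∑ y : S × A,
            γ ^ (t + 1) * ((Bmat P μ β t * polMat P π - Bmat P μ β (t + 1)) x y) := by
      unfold Zmat
      rw [← Summable.tsum_finsetSum (fun y _ => hsummable y)]
    rw [hswap]
    have hterm : ∀ t : ℕ, ∑ y : S × A,
        γ ^ (t + 1) * ((Bmat P μ β t * polMat P π - Bmat P μ β (t + 1)) x y)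
          = γ ^ (t + 1) * (r t - r (t + 1)) := by
      intro t
      rw [← Finset.mul_sum, hDsum]
    rw [tsum_congr hterm]
    apply Real.tsum_le_of_sum_range_le
    · intro t
      have := hmono t
      have := pow_nonneg hγ0 (t + 1)
      nlinarith
    · intro n
      calc ∑ t ∈ Finset.range n, γ ^ (t + 1) * (r t - r (t + 1))
          ≤ ∑ t ∈ Finset.range n, (γ ^ (t + 1) * r t - γ ^ (t + 1 + 1) * r (t + 1)) := by
            apply Finset.sum_le_sum
            intro t _
            have h1 : γ ^ (t + 1 + 1) ≤ γ ^ (t + 1) :=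
              pow_le_pow_of_le_one hγ0 hγ1.le (by omega)
            have h2 := hrnn (t + 1)
            nlinarith
        _ = γ ^ (0 + 1) * r 0 - γ ^ (n + 1) * r n :=
            Finset.sum_range_sub' (fun t => γ ^ (t + 1) * r t) n
        _ ≤ γ := by
            have h0 : r 0 = 1 := row_zero P μ β hβ x
            have h3 := mul_nonneg (pow_nonneg hγ0 (n + 1)) (hrnn n)
            rw [h0]
            have h4 : γ ^ (0 + 1) = γ := by ring
            rw [h4, mul_one]
            linarith
end

section
/- Let π_i be a target policy, μ_i a behavior policy, and β^{(i)} a trace function satisfying Condition 1, with C_i := Σ_{t=0}^∞ γ^t B_t^{(i)} and M_i Q := Q + C_i (T_{π_i} Q − Q). Let π* be an optimal policy (so T_{π*} Q* = T Q* = Q*) and let ε_i ≥ 0 satisfy T_{π_i} Q ≥ T Q − ε_i ‖Q‖ 𝟙 entrywise. Then M_i Q − Q* ≥ Z_i^* (Q − Q*) − ε_i ‖Q‖ C_i 𝟙 entrywise, where Z_i^* := I − C_i (I − γ P_{π*}). -/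
open scoped BigOperators

/-- lower bound in the control analysis:
`M_i Q − Q* ≥ Z_i^* (Q − Q*) − ε_i ‖Q‖ C_i 𝟙` entrywise,
where `Z_i^* = I − C_i(I − γ P_{π*})` and `π*` is an optimal policy. -/
theorem stmt6 {S A : Type} [Fintype S] [Fintype A] [DecidableEq S] [DecidableEq A]
    [Nonempty S] [Nonempty A]
    (P : S → A → S → ℝ) (R : S × A → ℝ) (π μ : S → A → ℝ) (γ : ℝ)
    (β : (t : ℕ) → (Fin (t + 1) → S × A) → ℝ)
    (hP : IsTransition P) (hπ : IsPolicy π) (hμ : IsBehavior μ) (hβ : IsTrace β)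
    (hγ0 : 0 ≤ γ) (hγ1 : γ < 1)
    (hc : Cond1 π μ β)
    (Qstar : S × A → ℝ) (hQstar : Topt P R γ Qstar = Qstar)
    (πstar : S → A → ℝ) (hπstar : IsPolicy πstar)
    (hopt : Tpi P R πstar γ Qstar = Topt P R γ Qstar)
    (Q : S × A → ℝ) (ε : ℝ) (hε : 0 ≤ ε)
    (hεQ : ∀ x : S × A, Topt P R γ Q x - ε * ‖Q‖ ≤ Tpi P R π γ Q x) :
    ∀ x : S × A,
      ((1 - Cmat P μ β γ * (1 - γ • polMat P πstar)).mulVec (Q - Qstar)) x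
        - ε * ‖Q‖ * (Cmat P μ β γ).mulVec (fun _ => (1 : ℝ)) x
      ≤ MopC P R π μ β γ Q x - Qstar x := by

  intro x
  set Cm := Cmat P μ β γ with hCm
  -- nonnegativity of C entries
  have hC : ∀ a b, 0 ≤ Cm a b := by
    intro a b
    apply tsum_nonneg
    intro t
    apply mul_nonneg (pow_nonneg hγ0 t)
    apply Finset.sum_nonneg
    intro F _
    split
    · exact mul_nonneg (Finset.prod_nonneg fun k _ =>
        mul_nonneg (hP.1 _ _ _) (hμ.1.1 _ _)) (hβ.1 _ _)
    · exact le_rfl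
  have hQs : Tpi P R πstar γ Qstar = Qstar := hopt.trans hQstar
  -- T_{π*} Q ≤ T Q pointwise
  have hkey : ∀ y : S × A, Tpi P R πstar γ Q y ≤ Topt P R γ Q y := by
    intro y
    have hsup : ∀ s' : S, (∑ a, πstar s' a * Q (s', a)) ≤ ⨆ a', Q (s', a') := by
      intro s'
      calc (∑ a, πstar s' a * Q (s', a))
          ≤ ∑ a, πstar s' a * ⨆ a', Q (s', a') := by
            apply Finset.sum_le_sum
            intro a _
            exact mul_le_mul_of_nonneg_left
              (le_ciSup (f := fun a'' => Q (s', a'')) (Set.finite_range _).bddAbove a) (hπstar.1 s' a)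
        _ = ⨆ a', Q (s', a') := by rw [← Finset.sum_mul, hπstar.2, one_mul]
    simp only [Tpi, Topt, Matrix.mulVec, dotProduct, polMat]
    have : (∑ z : S × A, P y.1 y.2 z.1 * πstar z.1 z.2 * Q z)
        ≤ ∑ s', P y.1 y.2 s' * ⨆ a', Q (s', a') := by
      rw [Fintype.sum_prod_type]
      apply Finset.sum_le_sum
      intro s' _
      have : (∑ a, P y.1 y.2 s' * πstar s' a * Q (s', a))
          = P y.1 y.2 s' * ∑ a, πstar s' a * Q (s', a) := by
        rw [Finset.mul_sum]; apply Finset.sum_congr rfl; intro a _; ring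
      rw [this]
      exact mul_le_mul_of_nonneg_left (hsup s') (hP.1 _ _ _)
    nlinarith [this, hγ0, mul_le_mul_of_nonneg_left this hγ0]
  -- monotonicity of C.mulVec
  have hmain : ∀ v w : S × A → ℝ, (∀ y, v y ≤ w y) →
      Cm.mulVec v x ≤ Cm.mulVec w x := by
    intro v w h
    simp only [Matrix.mulVec, dotProduct]
    exact Finset.sum_le_sum fun y _ => mul_le_mul_of_nonneg_left (h y) (hC x y)
  -- rewrite the Z* term
  have e1 : (1 - Cm * (1 - γ • polMat P πstar)).mulVec (Q - Qstar) x
      = (Q x - Qstar x)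
        - Cm.mulVec (fun y => Q y - Tpi P R πstar γ Q y) x := by
    rw [Matrix.sub_mulVec, Matrix.one_mulVec, ← Matrix.mulVec_mulVec]
    have hv : (1 - γ • polMat P πstar).mulVec (Q - Qstar)
        = fun y => Q y - Tpi P R πstar γ Q y := by
      funext y
      rw [Matrix.sub_mulVec, Matrix.one_mulVec, Matrix.smul_mulVec,
        Matrix.mulVec_sub]
      have h1 : Qstar y = R y + γ * (polMat P πstar).mulVec Qstar y := by
        conv_lhs => rw [← hQs]
        rfl
      simp only [Tpi, Pi.sub_apply, Pi.smul_apply, smul_eq_mul]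
      linarith
    rw [hv]
    simp [Pi.sub_apply]
  have h2 : Cm.mulVec (fun y => Tpi P R πstar γ Q y - Q y - ε * ‖Q‖) x
      ≤ Cm.mulVec (fun y => Tpi P R π γ Q y - Q y) x := by
    apply hmain
    intro y
    have := hεQ y
    have := hkey y
    linarith
  have h3 : Cm.mulVec (fun y => Tpi P R πstar γ Q y - Q y - ε * ‖Q‖) x
      = -(Cm.mulVec (fun y => Q y - Tpi P R πstar γ Q y) x)
        - ε * ‖Q‖ * Cm.mulVec (fun _ => (1 : ℝ)) x := by
    simp only [Matrix.mulVec, dotProduct]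
    rw [Finset.mul_sum, ← Finset.sum_neg_distrib, ← Finset.sum_sub_distrib]
    apply Finset.sum_congr rfl
    intro y _
    ring
  simp only [MopC, ← hCm]
  rw [e1]
  linarith
end

section
/- Fix λ ∈ [0,1] and a sequence of nonnegative reals ρ_1, ρ_2, …. The RBIS recursion β_0 := 1, β_t := min(λ^t, β_{t−1} ρ_t), unrolls to the closed form β_t = min over j ∈ {0, 1, …, t} of λ^{t−j} ∏_{k=t−j+1}^{t} ρ_k (where the j = 0 term is λ^t and the j = t term is ∏_{k=1}^{t} ρ_k); i.e., the RBIS trace is the minimum of all past discounted n-step importance-sampling estimates. -/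
/-!
Write `B t` for the minimum of the discounted `j`-step products. Splitting off the `j = 0` term
`λ^t`, every other `(j+1)`-step product at time `t+1` is a `j`-step product at time `t` times
`ρ_{t+1}`; since multiplying by `ρ_{t+1} ≥ 0` commutes with `min`, `B` satisfies the RBIS
recursion with `B 0 = 1`, so it coincides with `β`.
-/

open Finset

noncomputable def minNStepProduct (lam : ℝ) (ρ : ℕ → ℝ) (t : ℕ) : ℝ :=
  (range (t + 1)).inf' nonempty_range_add_one
    (fun j => lam ^ (t - j) * ∏ k ∈ Icc (t - j + 1) t, ρ k)

lemma Finset.inf'_range_add_two {α : Type*} [SemilatticeInf α] (f : ℕ → α) (n : ℕ) :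
    (range (n + 2)).inf' nonempty_range_add_one f
      = f 0 ⊓ (range (n + 1)).inf' nonempty_range_add_one (fun i => f (i + 1)) := by
  simp only [range_add_one' (n + 1), inf'_insert nonempty_range_add_one.map, inf'_map]
  rfl

lemma pow_sub_mul_prod_Icc_succ {M : Type*} [CommMonoid M] (lam : M) (ρ : ℕ → M)
    {t j : ℕ} (hj : j ≤ t) :
    lam ^ (t + 1 - (j + 1)) * ∏ k ∈ Icc (t + 1 - (j + 1) + 1) (t + 1), ρ k
      = lam ^ (t - j) * (∏ k ∈ Icc (t - j + 1) t, ρ k) * ρ (t + 1) := by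
  rw [Nat.add_sub_add_right, prod_Icc_succ_top (by omega), mul_assoc]

lemma minNStepProduct_zero (lam : ℝ) (ρ : ℕ → ℝ) : minNStepProduct lam ρ 0 = 1 := by
  simp [minNStepProduct]

lemma minNStepProduct_succ (lam : ℝ) (ρ : ℕ → ℝ) {t : ℕ} (hρ : 0 ≤ ρ (t + 1)) :
    minNStepProduct lam ρ (t + 1) = min (lam ^ (t + 1)) (minNStepProduct lam ρ t * ρ (t + 1)) := by
  have hlast : ∏ k ∈ Icc (t + 1 + 1) (t + 1), ρ k = 1 := by simp
  rw [minNStepProduct, inf'_range_add_two, minNStepProduct,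
    apply_inf'_eq_inf'_comp _ (· * ρ (t + 1)) fun x y => min_mul_of_nonneg x y hρ,
    Nat.sub_zero, hlast, mul_one]
  congr 1
  exact inf'_congr _ rfl fun j hj =>
    pow_sub_mul_prod_Icc_succ lam ρ (Nat.lt_succ_iff.mp (mem_range.mp hj))

theorem stmt13_general (lam : ℝ)
    (ρ : ℕ → ℝ) (hρ : ∀ k, 0 ≤ ρ k)
    (β : ℕ → ℝ) (hβ0 : β 0 = 1)
    (hβ : ∀ t : ℕ, β (t + 1) = min (lam ^ (t + 1)) (β t * ρ (t + 1))) :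
    ∀ t : ℕ,
      β t = (Finset.range (t + 1)).inf' Finset.nonempty_range_add_one
        (fun j => lam ^ (t - j) * ∏ k ∈ Finset.Icc (t - j + 1) t, ρ k) := by
  intro t
  change β t = minNStepProduct lam ρ t
  induction t with
  | zero => rw [hβ0, minNStepProduct_zero]
  | succ t ih => rw [hβ t, ih, minNStepProduct_succ lam ρ (hρ (t + 1))]

/-- the RBIS recursion `β_0 = 1`, `β_t = min(λ^t, β_{t−1} ρ_t)` unrolls to
`β_t = min_{0 ≤ j ≤ t} λ^{t−j} ∏_{k=t−j+1}^{t} ρ_k`. -/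
theorem stmt13 (lam : ℝ) (hlam : lam ∈ Set.Icc (0 : ℝ) 1)
    (ρ : ℕ → ℝ) (hρ : ∀ k, 0 ≤ ρ k)
    (β : ℕ → ℝ) (hβ0 : β 0 = 1)
    (hβ : ∀ t : ℕ, β (t + 1) = min (lam ^ (t + 1)) (β t * ρ (t + 1))) :
    ∀ t : ℕ,
      β t = (Finset.range (t + 1)).inf' Finset.nonempty_range_add_one
        (fun j => lam ^ (t - j) * ∏ k ∈ Finset.Icc (t - j + 1) t, ρ k) :=
  stmt13_general lam ρ hρ β hβ0 hβ
end

section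
/- Fix λ ∈ [0,1] and a sequence of nonnegative reals ρ_1, ρ_2, …. For every t ≥ 0 and every j ∈ {0, 1, …, t}, the Retrace trace satisfies ∏_{k=1}^{t} λ min(1, ρ_k) ≤ λ^{t−j} ∏_{k=t−j+1}^{t} ρ_k. Consequently, the Retrace trace never exceeds the RBIS trace: ∏_{k=1}^{t} λ min(1, ρ_k) ≤ β_t for all t, where β_0 = 1 and β_t = min(λ^t, β_{t−1} ρ_t). -/
/-!
Writing the Retrace trace as `λ^t ∏_{k ≤ t} min(1, ρ_k)`, the bound for a given `j` comes from
`λ^t ≤ λ^{t-j}`, dropping the first `t - j` factors `min(1, ρ_k) ≤ 1` and bounding the others by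
`ρ_k`. The comparison with RBIS then goes by induction along the recursion for `β`: the case
`j = 0` handles `λ^t`, and each new Retrace factor satisfies `λ min(1, ρ_t) ≤ ρ_t`.
-/

open Finset

section

variable {R : Type*} [CommSemiring R] [LinearOrder R]

theorem Finset.prod_min_one_le_prod_of_subset [IsOrderedRing R] {ι : Type*} {s t : Finset ι}
    {ρ : ι → R} (hst : s ⊆ t) (hρ : ∀ i ∈ t, 0 ≤ ρ i) :
    ∏ i ∈ t, min 1 (ρ i) ≤ ∏ i ∈ s, ρ i :=
  calc ∏ i ∈ t, min 1 (ρ i)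
      ≤ ∏ i ∈ s, min 1 (ρ i) :=
        prod_le_prod_of_subset_of_le_one hst (fun i hi => le_min zero_le_one (hρ i hi))
          fun _ _ _ => min_le_left _ _
    _ ≤ ∏ i ∈ s, ρ i :=
        prod_le_prod (fun i hi => le_min zero_le_one (hρ i (hst hi))) fun _ _ => min_le_right _ _

def retraceTrace (lam : R) (ρ : ℕ → R) (t : ℕ) : R :=
  ∏ k ∈ Icc 1 t, lam * min 1 (ρ k)

variable {lam : R} {ρ : ℕ → R}

theorem retraceTrace_eq_pow_mul (t : ℕ) :
    retraceTrace lam ρ t = lam ^ t * ∏ k ∈ Icc 1 t, min 1 (ρ k) := by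
  rw [retraceTrace, prod_mul_distrib, prod_const, Nat.card_Icc, Nat.add_sub_cancel]

theorem retraceTrace_succ (t : ℕ) :
    retraceTrace lam ρ (t + 1) = retraceTrace lam ρ t * (lam * min 1 (ρ (t + 1))) :=
  prod_Icc_succ_top (by omega) _

theorem retraceTrace_le_pow_mul_prod [IsOrderedRing R] (hlam₀ : 0 ≤ lam) (hlam₁ : lam ≤ 1) (hρ : ∀ k, 0 ≤ ρ k)
    (t j : ℕ) : retraceTrace lam ρ t ≤ lam ^ (t - j) * ∏ k ∈ Icc (t - j + 1) t, ρ k := by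
  rw [retraceTrace_eq_pow_mul]
  have hpow : lam ^ t ≤ lam ^ (t - j) := pow_le_pow_of_le_one hlam₀ hlam₁ (Nat.sub_le t j)
  have hprod : ∏ k ∈ Icc 1 t, min 1 (ρ k) ≤ ∏ k ∈ Icc (t - j + 1) t, ρ k :=
    prod_min_one_le_prod_of_subset (Icc_subset_Icc_left (by omega)) fun k _ => hρ k
  exact mul_le_mul hpow hprod (prod_nonneg fun k _ => le_min zero_le_one (hρ k))
    (pow_nonneg hlam₀ _)

theorem retraceTrace_le_of_rbis [IsOrderedRing R] (hlam₀ : 0 ≤ lam) (hlam₁ : lam ≤ 1) (hρ : ∀ k, 0 ≤ ρ k)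
    {β : ℕ → R} (hβ0 : β 0 = 1)
    (hβ : ∀ t : ℕ, β (t + 1) = min (lam ^ (t + 1)) (β t * ρ (t + 1))) (t : ℕ) :
    retraceTrace lam ρ t ≤ β t := by
  induction t with
  | zero => simp [retraceTrace, hβ0]
  | succ t ih =>
    rw [hβ t]
    refine le_min ?_ ?_
    · simpa using retraceTrace_le_pow_mul_prod hlam₀ hlam₁ hρ (t + 1) 0
    · have hfactor : lam * min 1 (ρ (t + 1)) ≤ ρ (t + 1) :=
        (mul_le_of_le_one_left (le_min zero_le_one (hρ _)) hlam₁).trans (min_le_right _ _)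
      rw [retraceTrace_succ]
      exact mul_le_mul ih hfactor (mul_nonneg hlam₀ (le_min zero_le_one (hρ _)))
        ((prod_nonneg fun k _ => mul_nonneg hlam₀ (le_min zero_le_one (hρ k))).trans ih)

end

/-- for every `t` and `j ≤ t`, the Retrace trace `∏_{k=1}^t λ min(1, ρ_k)`
is at most `λ^{t−j} ∏_{k=t−j+1}^{t} ρ_k`; consequently the Retrace trace never exceeds
the RBIS trace `β_t` (with `β_0 = 1`, `β_t = min(λ^t, β_{t−1} ρ_t)`). -/
theorem stmt14 (lam : ℝ) (hlam : lam ∈ Set.Icc (0 : ℝ) 1)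
    (ρ : ℕ → ℝ) (hρ : ∀ k, 0 ≤ ρ k)
    (β : ℕ → ℝ) (hβ0 : β 0 = 1)
    (hβ : ∀ t : ℕ, β (t + 1) = min (lam ^ (t + 1)) (β t * ρ (t + 1))) :
    (∀ t : ℕ, ∀ j ≤ t,
      ∏ k ∈ Finset.Icc 1 t, lam * min 1 (ρ k) ≤
        lam ^ (t - j) * ∏ k ∈ Finset.Icc (t - j + 1) t, ρ k) ∧
    ∀ t : ℕ, ∏ k ∈ Finset.Icc 1 t, lam * min 1 (ρ k) ≤ β t :=
  ⟨fun t j _ => retraceTrace_le_pow_mul_prod hlam.1 hlam.2 hρ t j,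
    retraceTrace_le_of_rbis hlam.1 hlam.2 hρ hβ0 hβ⟩
end

section
/- On-policy binary traces can produce a non-contraction: let P_π := (1/2)·[[1,1],[1,1]], B_0 := I (2×2 identity), and B_t := (1/2)·[[1,0],[1,0]] for all t ≥ 1. Then for every γ ∈ [0,1) the series Z := Σ_{t=1}^∞ γ^t (B_{t−1} P_π − B_t) converges and equals (γ/2)·[[0,1],[0,1]] + (γ²/(4(1−γ)))·[[−1,1],[−1,1]]; in particular, for γ = 2/3 one has Z = (1/3)·[[−1,2],[−1,2]], whose maximum absolute row-sum norm equals 1, and for every γ ∈ [2/3, 1) the norm ‖Z‖ ≥ 1, so Z is not a contraction. -/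
lemma key15 (γ : ℝ) (h0 : 0 ≤ γ) (h1 : γ < 1) (a b : ℝ) (g : ℕ → ℝ)
    (hg0 : g 0 = a) (hg1 : ∀ t, g (t + 1) = b) :
    Summable (fun t : ℕ => γ ^ (t + 1) * g t) ∧
      ∑' t : ℕ, γ ^ (t + 1) * g t = γ * a + γ ^ 2 / (1 - γ) * b := by
  have hfun : (fun t : ℕ => γ ^ (t + 1) * g t)
      = fun t => b * γ * γ ^ t + (if t = 0 then γ * (a - b) else 0) := by
    funext t
    cases t with
    | zero => simp [hg0]; ring
    | succ n => simp [hg1]; ring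
  have s1 : Summable (fun t : ℕ => b * γ * γ ^ t) :=
    (summable_geometric_of_lt_one h0 h1).mul_left _
  have s2 : Summable (fun t : ℕ => if t = 0 then γ * (a - b) else 0) := by
    apply summable_of_ne_finset_zero (s := {0})
    intro t ht
    simp at ht
    simp [ht]
  constructor
  · rw [hfun]; exact s1.add s2
  · rw [hfun, Summable.tsum_add s1 s2, tsum_mul_left, tsum_geometric_of_lt_one h0 h1, tsum_ite_eq]
    have : (1 : ℝ) - γ ≠ 0 := by linarith
    field_simp
    ring


/-- Policy matrix of Counterexample 2 (uniform-random policy in a 1-state, 2-action MDP). -/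
noncomputable def Ppi15 : Matrix (Fin 2) (Fin 2) ℝ := (1 / 2 : ℝ) • !![1, 1; 1, 1]

/-- Trace matrices of Counterexample 2: `B_0 = I` and `B_t = (1/2)·[[1,0],[1,0]]`, `t ≥ 1`. -/
noncomputable def B15 : ℕ → Matrix (Fin 2) (Fin 2) ℝ
  | 0 => 1
  | _ + 1 => (1 / 2 : ℝ) • !![1, 0; 1, 0]

/-- `Z = Σ_{t=1}^∞ γ^t (B_{t−1} P_π − B_t)`, computed entrywise. -/
noncomputable def Z15 (γ : ℝ) : Matrix (Fin 2) (Fin 2) ℝ :=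
  fun i j => ∑' t : ℕ, γ ^ (t + 1) * ((B15 t * Ppi15 - B15 (t + 1)) i j)

/-- Maximum absolute row-sum (`ℓ∞`-induced) norm on 2×2 real matrices. -/
def rowNorm2 (M : Matrix (Fin 2) (Fin 2) ℝ) : ℝ :=
  max (|M 0 0| + |M 0 1|) (|M 1 0| + |M 1 1|)

/-- On-policy binary traces can produce a non-contraction:
for every `γ ∈ [0,1)` the series defining `Z` converges and
`Z = (γ/2)·[[0,1],[0,1]] + (γ²/(4(1−γ)))·[[−1,1],[−1,1]]`; at `γ = 2/3`,
`Z = (1/3)·[[−1,2],[−1,2]]` with max absolute row-sum norm 1, and for every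
`γ ∈ [2/3, 1)` the norm is at least 1, so `Z` is not a contraction. -/
theorem stmt15 :
    (∀ γ : ℝ, 0 ≤ γ → γ < 1 →
      (∀ i j : Fin 2,
        Summable fun t : ℕ => γ ^ (t + 1) * ((B15 t * Ppi15 - B15 (t + 1)) i j)) ∧
      Z15 γ = (γ / 2) • !![0, 1; 0, 1] + (γ ^ 2 / (4 * (1 - γ))) • !![-1, 1; -1, 1]) ∧
    Z15 (2 / 3) = (1 / 3 : ℝ) • !![-1, 2; -1, 2] ∧
    rowNorm2 (Z15 (2 / 3)) = 1 ∧
    ∀ γ : ℝ, 2 / 3 ≤ γ → γ < 1 → 1 ≤ rowNorm2 (Z15 γ) := by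
  have hA0 : ∀ i j : Fin 2, (B15 0 * Ppi15 - B15 1) i j
      = 1 / 2 * (!![0, 1; 0, 1] : Matrix (Fin 2) (Fin 2) ℝ) i j := by
    intro i j
    fin_cases i <;> fin_cases j <;>
      simp [B15, Ppi15, Matrix.mul_apply, Fin.sum_univ_two] <;> norm_num
  have hA1 : ∀ (t : ℕ) (i j : Fin 2), (B15 (t + 1) * Ppi15 - B15 (t + 2)) i j
      = 1 / 4 * (!![-1, 1; -1, 1] : Matrix (Fin 2) (Fin 2) ℝ) i j := by
    intro t i j
    fin_cases i <;> fin_cases j <;>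
      simp [B15, Ppi15, Matrix.mul_apply, Fin.sum_univ_two] <;> norm_num
  have part1 : ∀ γ : ℝ, 0 ≤ γ → γ < 1 →
      (∀ i j : Fin 2,
        Summable fun t : ℕ => γ ^ (t + 1) * ((B15 t * Ppi15 - B15 (t + 1)) i j)) ∧
      Z15 γ = (γ / 2) • !![0, 1; 0, 1] + (γ ^ 2 / (4 * (1 - γ))) • !![-1, 1; -1, 1] := by
    intro γ h0 h1
    have hkey := fun i j => key15 γ h0 h1
      (1 / 2 * (!![0, 1; 0, 1] : Matrix (Fin 2) (Fin 2) ℝ) i j)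
      (1 / 4 * (!![-1, 1; -1, 1] : Matrix (Fin 2) (Fin 2) ℝ) i j)
      (fun t => (B15 t * Ppi15 - B15 (t + 1)) i j)
      (hA0 i j) (fun t => hA1 t i j)
    refine ⟨fun i j => (hkey i j).1, ?_⟩
    ext i j
    have hne : (1 : ℝ) - γ ≠ 0 := by linarith
    rw [Z15]
    rw [(hkey i j).2]
    fin_cases i <;> fin_cases j <;>
      simp [Matrix.add_apply, Matrix.smul_apply, smul_eq_mul] <;>
      field_simp <;> first | ring1 | (left; ring1) | tauto
  have h23a : (0 : ℝ) ≤ 2 / 3 := by norm_num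
  have h23b : (2 / 3 : ℝ) < 1 := by norm_num
  have part2 : Z15 (2 / 3) = (1 / 3 : ℝ) • !![-1, 2; -1, 2] := by
    rw [(part1 (2/3) h23a h23b).2]
    ext i j
    fin_cases i <;> fin_cases j <;>
      simp [Matrix.add_apply, Matrix.smul_apply, smul_eq_mul] <;> norm_num
  refine ⟨part1, part2, ?_, ?_⟩
  · rw [part2]
    simp [rowNorm2, Matrix.smul_apply, smul_eq_mul]
    norm_num [abs_of_nonpos, abs_of_nonneg]
  · intro γ hg hl
    have h0 : 0 ≤ γ := by linarith
    have hne : (0 : ℝ) < 1 - γ := by linarith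
    rw [(part1 γ h0 hl).2]
    set c : ℝ := γ ^ 2 / (4 * (1 - γ)) with hc
    have hcnn : 0 ≤ c := by positivity
    have hceq : c * (4 * (1 - γ)) = γ ^ 2 := div_mul_cancel₀ _ (by positivity)
    have e00 : ((γ / 2) • !![0, 1; 0, 1] + c • !![(-1 : ℝ), 1; -1, 1] : Matrix (Fin 2) (Fin 2) ℝ) 0 0 = -c := by
      simp [Matrix.add_apply, Matrix.smul_apply, smul_eq_mul]
    have e01 : ((γ / 2) • !![0, 1; 0, 1] + c • !![(-1 : ℝ), 1; -1, 1] : Matrix (Fin 2) (Fin 2) ℝ) 0 1 = γ / 2 + c := by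
      simp [Matrix.add_apply, Matrix.smul_apply, smul_eq_mul]
    have hle : 1 ≤ |(-c : ℝ)| + |γ / 2 + c| := by
      rw [abs_neg, abs_of_nonneg hcnn, abs_of_nonneg (by linarith)]
      nlinarith [hceq]
    calc (1 : ℝ) ≤ |(-c : ℝ)| + |γ / 2 + c| := hle
      _ ≤ _ := by rw [← e00, ← e01]; exact le_max_left _ _
end
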